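/- Let W₁, W₂ be Coxeter groups, c = (J₁, J₂, δ) and c' = (J'₁, J'₂, δ') admissible triples for W₁ × W₂, with associated subgroups W_c = {(w, δ(w)) : w ∈ W_{J₁}} and W_{c'} = {(w, δ'(w)) : w ∈ W_{J'₁}}. Then each double coset in W_{c'} \ (W₁ × W₂) / W_c contains at most one element (w₁, w₂) with w₁ ∈ ^{J'₁}W₁ and w₂ ∈ W₂^{J₂}. -/

import Mathlib

open CoxeterSystem

variable {B₁ W₁ B₂ W₂ : Type*} [Group W₁] [Group W₂]
  {M₁ : CoxeterMatrix B₁} {M₂ : CoxeterMatrix B₂}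

/-- The standard parabolic subgroup `W_J`. -/
def StdParabolic {B W : Type*} [Group W] {M : CoxeterMatrix B}
    (cs : CoxeterSystem M W) (J : Set B) : Subgroup W :=
  Subgroup.closure (cs.simple '' J)

/-!
Björner–Brenti's parity representation of `W` on `W × ZMod 2` shows that the parity of the number
of occurrences of a reflection `t` in the left inversion sequence of a word depends only on the
product of the word. This gives the strong exchange condition: the left inversions of `w` are the
entries of the left inversion sequence of any reduced word for `w`. Consequently lengths add,
`ℓ (u w) = ℓ u + ℓ w`, for `u ∈ W_J` and `w ∈ ^J W`, and the isomorphisms `δ`, `δ'` of an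
admissible triple preserve length.

Let `w₁' = x w₁ y` and `w₂' = δ' x * w₂ * δ y`. Length additivity in the first coordinate gives
`ℓ x ≤ ℓ y`, and in the second (after inverting) `ℓ y ≤ ℓ x`. Then the left inversions of
`x w₁ = w₁' y⁻¹` coming from `x` lie in `W_{J'₁}`, so they are not inversions of `w₁'`; having the
right number, they are exactly the `w₁'`-conjugates of the left inversions of `y⁻¹`. Hence
`w₁' y w₁'⁻¹ ∈ W_{J'₁}`, so `w₁' ∈ W_{J'₁} w₁` and `w₁' = w₁` by uniqueness of minimal coset
representatives. The second coordinate is the same argument applied to the inverses.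
-/

namespace CoxeterSystem

variable {B W : Type*} [Group W] {M : CoxeterMatrix B} (cs : CoxeterSystem M W)

local prefix:100 "s " => cs.simple
local prefix:100 "π " => cs.wordProd
local prefix:100 "ℓ " => cs.length
local prefix:100 "lis " => cs.leftInvSeq

theorem leftInvSeq_append (α β : List B) :
    lis (α ++ β) = lis α ++ (lis β).map (MulAut.conj (π α)) := by
  induction α with
  | nil => simp
  | cons i α ih => simp [leftInvSeq, ih, wordProd_cons, List.map_map, ← MulAut.coe_mul]

section ParityRepresentation

variable [DecidableEq W]

theorem count_leftInvSeq_append (α β : List B) (t : W) :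
    (lis (α ++ β)).count t = (lis α).count t + (lis β).count ((π α)⁻¹ * t * π α) := by
  have hconj : t = MulAut.conj (π α) ((π α)⁻¹ * t * π α) := by simp [mul_assoc]
  rw [leftInvSeq_append, List.count_append, hconj,
    List.count_map_of_injective _ _ (MulAut.conj (π α)).injective, ← hconj]

/-- The action of `s i` in the parity representation (Björner–Brenti, Thm. 1.4.3), with `ZMod 2`
in place of `{±1}`. -/
def parityFlip (i : B) : Function.End (W × ZMod 2) :=
  fun p => (s i * p.1 * s i, p.2 + if p.1 = s i then 1 else 0)

def wordParity (ω : List B) : Function.End (W × ZMod 2) :=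
  fun p => ((π ω)⁻¹ * p.1 * π ω, p.2 + (lis ω).count p.1)

theorem wordParity_cons (i : B) (ω : List B) :
    cs.wordParity (i :: ω) = cs.wordParity ω * cs.parityFlip i := by
  funext ⟨t, ε⟩
  have hcount := cs.count_leftInvSeq_append [i] ω t
  simp only [List.singleton_append, wordProd_singleton, leftInvSeq_singleton, inv_simple,
    List.count_singleton] at hcount
  show cs.wordParity (i :: ω) (t, ε) = cs.wordParity ω (cs.parityFlip i (t, ε))
  simp only [wordParity, parityFlip, hcount, wordProd_cons, mul_inv_rev, inv_simple]
  ext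
  · simp only [mul_assoc]
  · by_cases h : t = s i
    · simp [h, add_comm, add_left_comm]
    · simp [h, Ne.symm h]

theorem wordParity_alternatingWord (i j : B) (m : ℕ) :
    cs.wordParity (alternatingWord i j (2 * m)) = (cs.parityFlip j * cs.parityFlip i) ^ m := by
  induction m with
  | zero =>
    funext ⟨t, ε⟩
    show _ = (t, ε)
    simp [wordParity, alternatingWord]
  | succ m ih =>
    rw [show 2 * (m + 1) = 2 * m + 1 + 1 by ring, alternatingWord_succ', alternatingWord_succ']
    simp [wordParity_cons, ih, pow_succ, mul_assoc]

theorem even_count_leftInvSeq_alternatingWord (i j : B) (t : W) :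
    Even ((lis (alternatingWord i j (2 * M i j))).count t) := by
  set L := lis (alternatingWord i j (2 * M i j))
  have hdrop : L.drop (M i j) = L.take (M i j) := by
    apply List.ext_getElem (by simp only [List.length_drop, List.length_take, L,
      length_leftInvSeq, length_alternatingWord]; omega)
    intro k h₁ _
    simp only [List.length_drop, L, length_leftInvSeq, length_alternatingWord] at h₁
    simp only [List.getElem_drop, List.getElem_take, L]
    rw [getElem_leftInvSeq_alternatingWord _ _ _ _ _ (by omega),
      getElem_leftInvSeq_alternatingWord _ _ _ _ _ (by omega),
      prod_alternatingWord_eq_mul_pow, prod_alternatingWord_eq_mul_pow]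
    rw [M.symmetric i j, show (2 * (M j i + k) + 1) / 2 = M j i + k by omega,
      show (2 * k + 1) / 2 = k by omega, pow_add, simple_mul_simple_pow, one_mul]
    simp
  rw [← List.take_append_drop (M i j) L, hdrop, List.count_append]
  exact ⟨_, rfl⟩

theorem isLiftable_parityFlip : M.IsLiftable (fun i => MulOpposite.op (cs.parityFlip i)) := by
  intro i j
  rw [← MulOpposite.op_mul, ← MulOpposite.op_pow, ← wordParity_alternatingWord,
    MulOpposite.op_eq_one_iff]
  funext ⟨t, ε⟩
  obtain ⟨k, hk⟩ := cs.even_count_leftInvSeq_alternatingWord i j t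
  show _ = (t, ε)
  simp [wordParity, prod_alternatingWord_eq_mul_pow, hk, simple_mul_simple_pow,
    CharTwo.add_self_eq_zero]

-- A right action: by `wordParity_cons`, `wordParity` reverses products.
def parityRep : W →* (Function.End (W × ZMod 2))ᵐᵒᵖ := cs.lift ⟨_, cs.isLiftable_parityFlip⟩

theorem parityRep_wordProd (ω : List B) :
    cs.parityRep (π ω) = MulOpposite.op (cs.wordParity ω) := by
  induction ω with
  | nil =>
    rw [wordProd_nil, map_one]
    apply MulOpposite.unop_injective
    funext ⟨t, ε⟩
    show (t, ε) = _
    simp [wordParity]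
  | cons i ω ih =>
    rw [wordProd_cons, map_mul, ih, parityRep, lift_apply_simple, wordParity_cons,
      MulOpposite.op_mul]

-- Björner–Brenti's `η(w, t)`, written additively.
def inversionParity (w t : W) : ZMod 2 := ((cs.parityRep w).unop (t, 0)).2

theorem inversionParity_wordProd (ω : List B) (t : W) :
    cs.inversionParity (π ω) t = (lis ω).count t := by
  simp [inversionParity, parityRep_wordProd, wordParity]

theorem inversionParity_mul (u v t : W) :
    cs.inversionParity (u * v) t = cs.inversionParity u t + cs.inversionParity v (u⁻¹ * t * u) := by
  obtain ⟨α, rfl⟩ := cs.wordProd_surjective u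
  obtain ⟨β, rfl⟩ := cs.wordProd_surjective v
  simp only [← wordProd_append, inversionParity_wordProd, count_leftInvSeq_append, Nat.cast_add]

theorem inversionParity_self_of_isReflection {t : W} (ht : cs.IsReflection t) :
    cs.inversionParity t t = 1 := by
  obtain ⟨u, i, rfl⟩ := ht
  have hsimple : cs.inversionParity (s i) (s i) = 1 := by
    simpa using cs.inversionParity_wordProd [i] (s i)
  have hconj : u⁻¹ * (u * s i * u⁻¹) * u = s i := by group
  have hconj' : (u * s i)⁻¹ * (u * s i * u⁻¹) * (u * s i) = s i := by group
  have hinv := cs.inversionParity_mul u u⁻¹ (u * s i * u⁻¹)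
  rw [mul_inv_cancel, hconj, ← wordProd_nil, inversionParity_wordProd, leftInvSeq_nil,
    List.count_nil, Nat.cast_zero] at hinv
  rw [inversionParity_mul, hconj', inversionParity_mul, hconj, hsimple]
  linear_combination -hinv

end ParityRepresentation

theorem mem_leftInvSeq_of_isLeftInversion {ω : List B} {t : W}
    (ht : cs.IsLeftInversion (π ω) t) : t ∈ lis ω := by
  classical
  by_contra hnot
  -- `η(w, t) = η(t, t) + η(t w, t)` with `η(t, t) = 1`, so `t` is a left inversion of `t w`.
  obtain ⟨ω', hω', hprod⟩ := cs.exists_isReduced (t * π ω)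
  have hparity : cs.inversionParity (π ω') t = 1 := by
    have h := cs.inversionParity_mul t (t * π ω) t
    rw [← mul_assoc, ht.1.mul_self, one_mul, inversionParity_wordProd,
      List.count_eq_zero.mpr hnot, inversionParity_self_of_isReflection _ ht.1,
      show t⁻¹ * t * t = t by group, hprod, Nat.cast_zero] at h
    exact (CharTwo.add_eq_zero.mp h.symm).symm
  have hmem : t ∈ lis ω' := by
    by_contra hnot'
    rw [inversionParity_wordProd, List.count_eq_zero.mpr hnot', Nat.cast_zero] at hparity
    exact zero_ne_one hparity
  have hlt := (cs.isLeftInversion_of_mem_leftInvSeq hω' hmem).2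
  rw [← hprod, ← mul_assoc, ht.1.mul_self, one_mul] at hlt
  exact absurd ht.2 (by omega)

theorem mem_leftInvSeq_iff {ω : List B} (hω : cs.IsReduced ω) {t : W} :
    t ∈ lis ω ↔ cs.IsLeftInversion (π ω) t :=
  ⟨cs.isLeftInversion_of_mem_leftInvSeq hω, cs.mem_leftInvSeq_of_isLeftInversion⟩

theorem exists_isReduced_sublist (ω : List B) :
    ∃ ω' : List B, cs.IsReduced ω' ∧ ω'.Sublist ω ∧ π ω' = π ω := by
  induction ω with
  | nil => exact ⟨[], by simp [IsReduced], List.Sublist.slnil, rfl⟩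
  | cons i ω ih =>
    obtain ⟨α, hα, hsub, hprod⟩ := ih
    rcases cs.length_simple_mul (π α) i with hlong | hshort
    · refine ⟨i :: α, ?_, hsub.cons_cons i, by rw [wordProd_cons, wordProd_cons, hprod]⟩
      rw [IsReduced, wordProd_cons, hlong, hα, List.length_cons]
    · have hmem := cs.mem_leftInvSeq_of_isLeftInversion
        (⟨cs.isReflection_simple i, by omega⟩ : cs.IsLeftInversion (π α) (s i))
      obtain ⟨k, hk, hget⟩ := List.getElem_of_mem hmem
      rw [length_leftInvSeq] at hk
      have herase : s i * π α = π (α.eraseIdx k) := by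
        rw [← cs.getD_leftInvSeq_mul_wordProd, List.getD_eq_getElem _ _ (by simpa using hk),
          hget]
      refine ⟨α.eraseIdx k, ?_, ((List.eraseIdx_sublist α k).trans hsub).cons i,
        by rw [← herase, hprod, wordProd_cons]⟩
      rw [IsReduced, ← herase, List.length_eraseIdx_of_lt hk]
      rw [IsReduced] at hα
      omega

section Parabolic

variable {J : Set B}

theorem wordProd_mem_stdParabolic {ω : List B} (hω : ∀ i ∈ ω, i ∈ J) :
    π ω ∈ StdParabolic cs J :=
  Subgroup.list_prod_mem _ fun _ h ↦ by
    obtain ⟨i, hi, rfl⟩ := List.mem_map.mp h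
    exact Subgroup.subset_closure ⟨i, hω i hi, rfl⟩

theorem exists_word_of_mem_stdParabolic {g : W} (hg : g ∈ StdParabolic cs J) :
    ∃ ω : List B, (∀ i ∈ ω, i ∈ J) ∧ π ω = g := by
  induction hg using Subgroup.closure_induction with
  | mem x hx =>
    obtain ⟨i, hi, rfl⟩ := hx
    exact ⟨[i], by simpa using hi, wordProd_singleton _ _⟩
  | one => exact ⟨[], by simp, wordProd_nil _⟩
  | mul x y _ _ hx hy =>
    obtain ⟨α, hα, rfl⟩ := hx
    obtain ⟨β, hβ, rfl⟩ := hy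
    exact ⟨α ++ β, by simpa using fun i hi ↦ hi.elim (hα i) (hβ i), wordProd_append _ _ _⟩
  | inv x _ hx =>
    obtain ⟨α, hα, rfl⟩ := hx
    exact ⟨α.reverse, by simpa using hα, wordProd_reverse _ _⟩

theorem exists_isReduced_of_mem_stdParabolic {g : W} (hg : g ∈ StdParabolic cs J) :
    ∃ ω : List B, cs.IsReduced ω ∧ (∀ i ∈ ω, i ∈ J) ∧ π ω = g := by
  obtain ⟨ω, hω, rfl⟩ := cs.exists_word_of_mem_stdParabolic hg
  obtain ⟨ω', hred, hsub, hprod⟩ := cs.exists_isReduced_sublist ω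
  exact ⟨ω', hred, fun i hi ↦ hω i (hsub.subset hi), hprod⟩

theorem mem_stdParabolic_of_mem_leftInvSeq {ω : List B} (hω : ∀ i ∈ ω, i ∈ J) {t : W}
    (ht : t ∈ lis ω) : t ∈ StdParabolic cs J := by
  induction ω generalizing t with
  | nil => simp at ht
  | cons i ω ih =>
    have hi : s i ∈ StdParabolic cs J := Subgroup.subset_closure ⟨i, hω i (by simp), rfl⟩
    simp only [leftInvSeq, List.mem_cons, List.mem_map] at ht
    obtain rfl | ⟨t', ht', rfl⟩ := ht
    · exact hi
    · simp only [MulAut.conj_apply, inv_simple]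
      exact mul_mem (mul_mem hi (ih (fun j hj ↦ hω j (by simp [hj])) ht')) hi

-- The sets `^J W` and `W^J` of minimal length representatives of `W_J \ W` and `W / W_J`.
def leftMinReps (J : Set B) : Set W := {w | ∀ u ∈ StdParabolic cs J, ℓ w ≤ ℓ (u * w)}

def rightMinReps (J : Set B) : Set W := {w | ∀ u ∈ StdParabolic cs J, ℓ w ≤ ℓ (w * u)}

theorem inv_mem_leftMinReps {w : W} (hw : w ∈ cs.rightMinReps J) : w⁻¹ ∈ cs.leftMinReps J := by
  intro u hu
  calc ℓ w⁻¹ = ℓ w := cs.length_inv w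
    _ ≤ ℓ (w * u⁻¹) := hw u⁻¹ (inv_mem hu)
    _ = ℓ (u * w⁻¹) := by rw [← cs.length_inv, mul_inv_rev, inv_inv]

theorem isReduced_append_of_mem_leftMinReps {α ρ : List B} (hα : cs.IsReduced α)
    (hαJ : ∀ i ∈ α, i ∈ J) (hρ : cs.IsReduced ρ) (hw : π ρ ∈ cs.leftMinReps J) :
    cs.IsReduced (α ++ ρ) := by
  induction α with
  | nil => simpa using hρ
  | cons i α ih =>
    have hα' : cs.IsReduced α := by simpa using hα.drop 1
    have hαJ' : ∀ j ∈ α, j ∈ J := fun j hj ↦ hαJ j (by simp [hj])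
    have hred := ih hα' hαJ'
    rw [List.cons_append]
    rcases cs.length_simple_mul (π (α ++ ρ)) i with hlong | hshort
    · rw [IsReduced, wordProd_cons, hlong, hred.eq, List.length_cons]
    exfalso
    have hmem := cs.mem_leftInvSeq_of_isLeftInversion
      (⟨cs.isReflection_simple i, by omega⟩ : cs.IsLeftInversion (π (α ++ ρ)) (s i))
    rw [leftInvSeq_append, List.mem_append, List.mem_map] at hmem
    rcases hmem with hmem | ⟨t, ht, hconj⟩
    · have hlt := (cs.isLeftInversion_of_mem_leftInvSeq hα' hmem).2
      have hα_eq : ℓ (s i * π α) = α.length + 1 := by rw [← wordProd_cons]; exact hα.eq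
      rw [hα'.eq] at hlt
      omega
    · have hπα := cs.wordProd_mem_stdParabolic hαJ'
      have htJ : t ∈ StdParabolic cs J := by
        have ht_eq : t = (π α)⁻¹ * s i * π α := by rw [← hconj]; simp [mul_assoc]
        rw [ht_eq]
        exact mul_mem (mul_mem (inv_mem hπα) (Subgroup.subset_closure ⟨i, hαJ i (by simp), rfl⟩))
          hπα
      have hlt := (cs.isLeftInversion_of_mem_leftInvSeq hρ ht).2
      have := hw t htJ
      omega

theorem length_mul_of_mem_leftMinReps {w u : W} (hw : w ∈ cs.leftMinReps J)
    (hu : u ∈ StdParabolic cs J) : ℓ (u * w) = ℓ u + ℓ w := by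
  obtain ⟨α, hα, hαJ, rfl⟩ := cs.exists_isReduced_of_mem_stdParabolic hu
  obtain ⟨ρ, hρ, rfl⟩ := cs.exists_isReduced w
  rw [← wordProd_append, (cs.isReduced_append_of_mem_leftMinReps hα hαJ hρ hw).eq, hα.eq, hρ.eq,
    List.length_append]

theorem eq_of_mul_eq_of_mem_leftMinReps {w w' u : W} (hw : w ∈ cs.leftMinReps J)
    (hw' : w' ∈ cs.leftMinReps J) (hu : u ∈ StdParabolic cs J) (h : u * w = w') : w = w' := by
  have hlen := cs.length_mul_of_mem_leftMinReps hw hu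
  have hle := hw' u⁻¹ (inv_mem hu)
  rw [← h, inv_mul_cancel_left] at hle
  rw [← h, cs.length_eq_zero_iff.mp (by omega : ℓ u = 0), one_mul]

theorem length_add_length_le_of_eq_mul_mul {w w' x y : W} (hw : w ∈ cs.leftMinReps J)
    (hx : x ∈ StdParabolic cs J) (h : w' = x * w * y) : ℓ x + ℓ w ≤ ℓ w' + ℓ y :=
  calc ℓ x + ℓ w = ℓ (x * w) := (cs.length_mul_of_mem_leftMinReps hw hx).symm
    _ = ℓ (w' * y⁻¹) := by rw [h]; group
    _ ≤ ℓ w' + ℓ y⁻¹ := cs.length_mul_le _ _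
    _ = ℓ w' + ℓ y := by rw [length_inv]

theorem length_le_of_eq_mul_mul {w w' x y : W} (hw : w ∈ cs.leftMinReps J)
    (hw' : w' ∈ cs.leftMinReps J) (hx : x ∈ StdParabolic cs J) (h : w' = x * w * y) :
    ℓ x ≤ ℓ y := by
  have h₁ := cs.length_add_length_le_of_eq_mul_mul hw hx h
  have h₂ := cs.length_add_length_le_of_eq_mul_mul hw' (inv_mem hx)
    (show w = x⁻¹ * w' * y⁻¹ by rw [h]; group)
  rw [length_inv, length_inv] at h₂
  omega

-- The left inversions of `x` lie in `W_J`, hence are not inversions of `w'`; so they are among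
-- the `w'`-conjugates of the left inversions of `z`, and by counting they are all of them.
theorem conj_mem_stdParabolic_of_mul_eq_mul {w w' x z : W} (hx : x ∈ StdParabolic cs J)
    (hw' : w' ∈ cs.leftMinReps J) (h : x * w = w' * z) (hxw : ℓ (x * w) = ℓ x + ℓ w)
    (hw'z : ℓ (w' * z) = ℓ w' + ℓ z) (hzx : ℓ z ≤ ℓ x) : w' * z * w'⁻¹ ∈ StdParabolic cs J := by
  classical
  obtain ⟨α, hα, hαJ, rfl⟩ := cs.exists_isReduced_of_mem_stdParabolic hx
  obtain ⟨ρ, hρ, rfl⟩ := cs.exists_isReduced w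
  obtain ⟨ρ', hρ', rfl⟩ := cs.exists_isReduced w'
  obtain ⟨β, hβ, rfl⟩ := cs.exists_isReduced z
  have hred₁ : cs.IsReduced (α ++ ρ) := by
    rw [IsReduced, wordProd_append, hxw, hα.eq, hρ.eq, List.length_append]
  have hred₂ : cs.IsReduced (ρ' ++ β) := by
    rw [IsReduced, wordProd_append, hw'z, hρ'.eq, hβ.eq, List.length_append]
  have hsub : lis α ⊆ (lis β).map (MulAut.conj (π ρ')) := by
    intro t ht
    have ht' : t ∈ lis (ρ' ++ β) := by
      rw [cs.mem_leftInvSeq_iff hred₂, wordProd_append, ← h, ← wordProd_append,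
        ← cs.mem_leftInvSeq_iff hred₁, leftInvSeq_append]
      exact List.mem_append_left _ ht
    rw [leftInvSeq_append, List.mem_append] at ht'
    refine ht'.resolve_left fun htρ' ↦ ?_
    have hlt := (cs.isLeftInversion_of_mem_leftInvSeq hρ' htρ').2
    have := hw' t (cs.mem_stdParabolic_of_mem_leftInvSeq hαJ ht)
    omega
  have hperm := (List.subperm_of_subset hα.nodup_leftInvSeq hsub).perm_of_length_le
    (by simpa [← hα.eq, ← hβ.eq] using hzx)
  have hmem : π ρ' * (π β)⁻¹ * (π ρ')⁻¹ ∈ StdParabolic cs J := by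
    have := Subgroup.list_prod_mem (StdParabolic cs J) fun t ht ↦
      cs.mem_stdParabolic_of_mem_leftInvSeq hαJ (hperm.mem_iff.mpr ht)
    rwa [← map_list_prod, prod_leftInvSeq, MulAut.conj_apply] at this
  simpa [mul_assoc] using inv_mem hmem

theorem eq_of_eq_mul_mul_of_length_le {w w' x y : W} (hw : w ∈ cs.leftMinReps J)
    (hw' : w' ∈ cs.leftMinReps J) (hx : x ∈ StdParabolic cs J) (h : w' = x * w * y)
    (hyx : ℓ y ≤ ℓ x) : w' = w := by
  have h₁ := cs.length_add_length_le_of_eq_mul_mul hw hx h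
  have h₂ := cs.length_add_length_le_of_eq_mul_mul hw' (inv_mem hx)
    (show w = x⁻¹ * w' * y⁻¹ by rw [h]; group)
  rw [length_inv, length_inv] at h₂
  have hxw := cs.length_mul_of_mem_leftMinReps hw hx
  have hmul : x * w = w' * y⁻¹ := by rw [h]; group
  have hconj := cs.conj_mem_stdParabolic_of_mul_eq_mul hx hw' hmul hxw
    (by rw [← hmul, hxw, length_inv]; omega) (by rw [length_inv]; omega)
  refine (cs.eq_of_mul_eq_of_mem_leftMinReps hw hw' (mul_mem (inv_mem hconj) hx) ?_).symm
  rw [h]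
  group

end Parabolic

section Transport

variable {B' W' : Type*} [Group W'] {M' : CoxeterMatrix B'} (cs' : CoxeterSystem M' W')
  {J : Set B} {J' : Set B'} {δ : W → W'}

theorem exists_map_wordProd_eq_wordProd
    (hmul : ∀ a ∈ StdParabolic cs J, ∀ b ∈ StdParabolic cs J, δ (a * b) = δ a * δ b)
    (hsim : ∀ i ∈ J, ∃ j ∈ J', δ (s i) = cs'.simple j) {α : List B} (hα : ∀ i ∈ α, i ∈ J) :
    ∃ β : List B', (∀ j ∈ β, j ∈ J') ∧ β.length = α.length ∧ δ (π α) = cs'.wordProd β := by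
  induction α with
  | nil =>
    refine ⟨[], by simp, rfl, ?_⟩
    simpa using hmul 1 (one_mem _) 1 (one_mem _)
  | cons i α ih =>
    have hαJ : ∀ k ∈ α, k ∈ J := fun k hk ↦ hα k (by simp [hk])
    obtain ⟨β, hβ, hlen, hprod⟩ := ih hαJ
    obtain ⟨j, hj, hij⟩ := hsim i (hα i (by simp))
    refine ⟨j :: β, by simpa using ⟨hj, hβ⟩, by simp [hlen], ?_⟩
    rw [wordProd_cons, hmul _ (Subgroup.subset_closure ⟨i, hα i (by simp), rfl⟩) _
      (cs.wordProd_mem_stdParabolic hαJ), hij, hprod, wordProd_cons]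

theorem exists_wordProd_eq_map_wordProd
    (hmul : ∀ a ∈ StdParabolic cs J, ∀ b ∈ StdParabolic cs J, δ (a * b) = δ a * δ b)
    (hsim : ∀ j ∈ J', ∃ i ∈ J, δ (s i) = cs'.simple j) {β : List B'} (hβ : ∀ j ∈ β, j ∈ J') :
    ∃ α : List B, (∀ i ∈ α, i ∈ J) ∧ α.length = β.length ∧ δ (π α) = cs'.wordProd β := by
  induction β with
  | nil =>
    refine ⟨[], by simp, rfl, ?_⟩
    simpa using hmul 1 (one_mem _) 1 (one_mem _)
  | cons j β ih =>
    obtain ⟨α, hα, hlen, hprod⟩ := ih fun k hk ↦ hβ k (by simp [hk])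
    obtain ⟨i, hi, hij⟩ := hsim j (hβ j (by simp))
    refine ⟨i :: α, by simpa using ⟨hi, hα⟩, by simp [hlen], ?_⟩
    rw [wordProd_cons, hmul _ (Subgroup.subset_closure ⟨i, hi, rfl⟩) _
      (cs.wordProd_mem_stdParabolic hα), hij, hprod, wordProd_cons]

theorem length_map_of_injOn (hinj : Set.InjOn δ (StdParabolic cs J))
    (hmul : ∀ a ∈ StdParabolic cs J, ∀ b ∈ StdParabolic cs J, δ (a * b) = δ a * δ b)
    (hsim : δ '' (cs.simple '' J) = cs'.simple '' J') {g : W} (hg : g ∈ StdParabolic cs J) :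
    cs'.length (δ g) = ℓ g := by
  obtain ⟨α, hα, hαJ, rfl⟩ := cs.exists_isReduced_of_mem_stdParabolic hg
  obtain ⟨β, hβJ, hlen, hδα⟩ := cs.exists_map_wordProd_eq_wordProd cs' hmul
    (fun i hi ↦ by
      obtain ⟨j, hj, hij⟩ := hsim.le ⟨s i, ⟨i, hi, rfl⟩, rfl⟩
      exact ⟨j, hj, hij.symm⟩) hαJ
  obtain ⟨β', hβ', hβ'J, hβ'prod⟩ := cs'.exists_isReduced_of_mem_stdParabolic
    (hδα ▸ cs'.wordProd_mem_stdParabolic hβJ)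
  obtain ⟨α', hα'J, hlen', hδα'⟩ := cs.exists_wordProd_eq_map_wordProd cs' hmul
    (fun j hj ↦ by
      obtain ⟨_, ⟨i, hi, rfl⟩, hij⟩ := hsim.ge ⟨j, hj, rfl⟩
      exact ⟨i, hi, hij⟩) hβ'J
  have hα' : π α' = π α := hinj (cs.wordProd_mem_stdParabolic hα'J)
    (cs.wordProd_mem_stdParabolic hαJ) (hδα'.trans hβ'prod)
  apply le_antisymm
  · calc cs'.length (δ (π α)) ≤ β.length := hδα ▸ cs'.length_wordProd_le β
      _ = ℓ (π α) := by rw [hlen, hα.eq]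
  · calc ℓ (π α) ≤ α'.length := hα' ▸ cs.length_wordProd_le α'
      _ = cs'.length (δ (π α)) := by rw [hlen', ← hβ'.eq, hβ'prod]

end Transport

end CoxeterSystem

/-- Corollary 2.5: for admissible triples `c = (J₁, J₂, δ)` and `c' = (J'₁, J'₂, δ')` of
`W₁ × W₂`, each double coset in `W_{c'} \ (W₁ × W₂) / W_c` contains at most one element
`(w₁, w₂)` with `w₁ ∈ ^{J'₁}W₁` and `w₂ ∈ W₂^{J₂}`. -/
theorem unique_min_rep_pair_in_double_coset
    (cs₁ : CoxeterSystem M₁ W₁) (cs₂ : CoxeterSystem M₂ W₂)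
    (J₁ J'₁ : Set B₁) (J₂ J'₂ : Set B₂) (δ δ' : W₁ → W₂)
    -- `c = (J₁, J₂, δ)` is admissible
    (hδbij : Set.BijOn δ (StdParabolic cs₁ J₁) (StdParabolic cs₂ J₂))
    (hδmul : ∀ a ∈ StdParabolic cs₁ J₁, ∀ b ∈ StdParabolic cs₁ J₁, δ (a * b) = δ a * δ b)
    (hδsim : δ '' (cs₁.simple '' J₁) = cs₂.simple '' J₂)
    -- `c' = (J'₁, J'₂, δ')` is admissible
    (hδ'bij : Set.BijOn δ' (StdParabolic cs₁ J'₁) (StdParabolic cs₂ J'₂))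
    (hδ'mul : ∀ a ∈ StdParabolic cs₁ J'₁, ∀ b ∈ StdParabolic cs₁ J'₁,
      δ' (a * b) = δ' a * δ' b)
    (hδ'sim : δ' '' (cs₁.simple '' J'₁) = cs₂.simple '' J'₂)
    (w₁ w₁' : W₁) (w₂ w₂' : W₂)
    (h₁ : ∀ u ∈ StdParabolic cs₁ J'₁, cs₁.length w₁ ≤ cs₁.length (u * w₁))
    (h₂ : ∀ u ∈ StdParabolic cs₂ J₂, cs₂.length w₂ ≤ cs₂.length (w₂ * u))
    (h₁' : ∀ u ∈ StdParabolic cs₁ J'₁, cs₁.length w₁' ≤ cs₁.length (u * w₁'))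
    (h₂' : ∀ u ∈ StdParabolic cs₂ J₂, cs₂.length w₂' ≤ cs₂.length (w₂' * u))
    (hcoset : ∃ x ∈ StdParabolic cs₁ J'₁, ∃ y ∈ StdParabolic cs₁ J₁,
      w₁' = x * w₁ * y ∧ w₂' = δ' x * w₂ * δ y) :
    w₁' = w₁ ∧ w₂' = w₂ := by
  obtain ⟨x, hx, y, hy, hw₁', hw₂'⟩ := hcoset
  have hδy : cs₂.length (δ y) = cs₁.length y :=
    cs₁.length_map_of_injOn cs₂ hδbij.injOn hδmul hδsim hy
  have hδ'x : cs₂.length (δ' x) = cs₁.length x :=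
    cs₁.length_map_of_injOn cs₂ hδ'bij.injOn hδ'mul hδ'sim hx
  have hδy_mem : (δ y)⁻¹ ∈ StdParabolic cs₂ J₂ := inv_mem (hδbij.mapsTo hy)
  have hw₂'_inv : w₂'⁻¹ = (δ y)⁻¹ * w₂⁻¹ * (δ' x)⁻¹ := by rw [hw₂']; group
  have hxy : cs₁.length x ≤ cs₁.length y := cs₁.length_le_of_eq_mul_mul h₁ h₁' hx hw₁'
  have hyx : cs₁.length y ≤ cs₁.length x := by
    simpa [hδy, hδ'x] using cs₂.length_le_of_eq_mul_mul (cs₂.inv_mem_leftMinReps h₂)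
      (cs₂.inv_mem_leftMinReps h₂') hδy_mem hw₂'_inv
  refine ⟨cs₁.eq_of_eq_mul_mul_of_length_le h₁ h₁' hx hw₁' hyx, inv_injective ?_⟩
  exact cs₂.eq_of_eq_mul_mul_of_length_le (cs₂.inv_mem_leftMinReps h₂)
    (cs₂.inv_mem_leftMinReps h₂') hδy_mem hw₂'_inv (by simpa [hδy, hδ'x] using hxy)
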